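/- arXiv:2603.07790 — 2 statements merged into one kernel-verified Lean document; each statement's English description precedes it below -/
import Mathlib

section
/- Let μ be a probability measure on ℝ^d satisfying a weak Poincaré inequality with nonincreasing rate β_μ. Then for every p > 2, every s > 0, and every bounded Lipschitz f : ℝ^d → ℝ, Var_μ(f) ≤ β_μ(s^{p/(p−2)} / 2^{(3p−2)/(p−2)}) · ∫ |∇f|² dμ + s · ‖f − μ(f)‖²_{L^p(μ)}. -/
open MeasureTheory Real Filter Set
open scoped ENNReal RealInnerProductSpace BigOperators

noncomputable section

/-- Euclidean space `ℝ^d`. -/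
abbrev Euc (d : ℕ) := EuclideanSpace ℝ (Fin d)

/-- The variance of `f` under `μ` : `∫ f² dμ − (∫ f dμ)²`. -/
def var {E : Type*} [MeasurableSpace E] (μ : Measure E) (f : E → ℝ) : ℝ :=
  (∫ x, (f x) ^ 2 ∂μ) - (∫ x, f x ∂μ) ^ 2

/-- The oscillation `sup f − inf f` of a function. -/
def osc {E : Type*} (f : E → ℝ) : ℝ := sSup (Set.range f) - sInf (Set.range f)

/-- The oscillation of `f` on a set `s` : `sup_s f − inf_s f`. -/
def oscOn {E : Type*} (f : E → ℝ) (s : Set E) : ℝ := sSup (f '' s) - sInf (f '' s)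

/-- Bounded Lipschitz real valued functions. -/
def BddLip {E : Type*} [PseudoEMetricSpace E] (f : E → ℝ) : Prop :=
  (∃ K, LipschitzWith K f) ∧ (∃ M, ∀ x, |f x| ≤ M)

/-- `μ` satisfies a weak Poincaré inequality with rate function `β`:
for all `s > 0` and all bounded Lipschitz `f`,
`Var_μ(f) ≤ β(s) ∫ |∇f|² dμ + s · Osc(f)²`. -/
def WeakPoincare {E : Type*} [NormedAddCommGroup E] [NormedSpace ℝ E] [MeasurableSpace E]
    (μ : Measure E) (β : ℝ → ℝ) : Prop :=
  ∀ s : ℝ, 0 < s → ∀ f : E → ℝ, BddLip f →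
    var μ f ≤ β s * (∫ x, ‖fderiv ℝ f x‖ ^ 2 ∂μ) + s * (osc f) ^ 2

/-- `μ` satisfies a weighted Poincaré inequality with weight `ω` and constant `C`:
`Var_μ(f) ≤ C ∫ |∇f|² ω² dμ` for all bounded Lipschitz `f`. -/
def WeightedPoincare {E : Type*} [NormedAddCommGroup E] [NormedSpace ℝ E] [MeasurableSpace E]
    (μ : Measure E) (ω : E → ℝ) (C : ℝ) : Prop :=
  ∀ f : E → ℝ, BddLip f →
    var μ f ≤ C * (∫ x, ‖fderiv ℝ f x‖ ^ 2 * (ω x) ^ 2 ∂μ)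

/-- The entropy `Ent_μ(f²) = ∫ f² ln(f²/∫f²dμ) dμ`. -/
def entSq {E : Type*} [MeasurableSpace E] (μ : Measure E) (f : E → ℝ) : ℝ :=
  ∫ x, (f x) ^ 2 * Real.log ((f x) ^ 2 / ∫ y, (f y) ^ 2 ∂μ) ∂μ

/-- `μ` satisfies a weak logarithmic Sobolev inequality with rate function `β`. -/
def WeakLogSobolev {E : Type*} [NormedAddCommGroup E] [NormedSpace ℝ E] [MeasurableSpace E]
    (μ : Measure E) (β : ℝ → ℝ) : Prop :=
  ∀ s : ℝ, 0 < s → ∀ f : E → ℝ, BddLip f →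
    entSq μ f ≤ β s * (∫ x, ‖fderiv ℝ f x‖ ^ 2 ∂μ) + s * (osc f) ^ 2

/-- `μ` satisfies a weighted logarithmic Sobolev inequality with weight `ω`, constant `C`. -/
def WeightedLogSobolev {E : Type*} [NormedAddCommGroup E] [NormedSpace ℝ E] [MeasurableSpace E]
    (μ : Measure E) (ω : E → ℝ) (C : ℝ) : Prop :=
  ∀ f : E → ℝ, BddLip f →
    entSq μ f ≤ C * (∫ x, ‖fderiv ℝ f x‖ ^ 2 * (ω x) ^ 2 ∂μ)

/-- The Laplacian on Euclidean space: sum of second partial derivatives. -/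
def lap {d : ℕ} (f : Euc d → ℝ) (x : Euc d) : ℝ :=
  ∑ i : Fin d, iteratedFDeriv ℝ 2 f x ![EuclideanSpace.single i 1, EuclideanSpace.single i 1]

/-- The operator `L_V f = Δf − ⟨∇V, ∇f⟩`. -/
def LV {d : ℕ} (V f : Euc d → ℝ) (x : Euc d) : ℝ :=
  lap f x - ⟪gradient V x, gradient f x⟫

/-- The weighted generator `L^ω_V g = ω² Δg + ⟨∇ω² − ω² ∇V, ∇g⟩`. -/
def Lw {d : ℕ} (ω V f : Euc d → ℝ) (x : Euc d) : ℝ :=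
  (ω x) ^ 2 * lap f x +
    ⟪gradient (fun y => (ω y) ^ 2) x - (ω x) ^ 2 • gradient V x, gradient f x⟫

/-- The `L²(μ)`-capacity of a set `A`:
`inf { ∫ |∇φ|² dμ : φ Lipschitz with compact support, 1_A ≤ φ ≤ 1 }`. -/
def cap {E : Type*} [NormedAddCommGroup E] [NormedSpace ℝ E] [MeasurableSpace E]
    (μ : Measure E) (A : Set E) : ℝ :=
  sInf ((fun φ : E → ℝ => ∫ x, ‖fderiv ℝ φ x‖ ^ 2 ∂μ) ''
    {φ | (∃ K, LipschitzWith K φ) ∧ HasCompactSupport φ ∧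
      (∀ x, A.indicator 1 x ≤ φ x) ∧ (∀ x, φ x ≤ 1)})

/-!
Truncate the centred function `g = f - μ(f)` at height `R`: `h = max (min g R) (-R)` is bounded
Lipschitz with `|∇h| ≤ |∇f|` and `Osc(h) ≤ 2R`, so the weak Poincaré inequality applies to it.
With `A = ∫ |g|^p`, the Chebyshev-type bound `g² 1_{|g| > R} ≤ |g|^p / R^(p-2)` gives
`∫ g² ≤ ∫ h² + A / R^(p-2)` and, since `∫ g = 0`, `(∫ h)² ≤ ∫ (g - h)² ≤ A / R^(p-2)`. Hence
`Var(f) ≤ β(t) ∫ |∇f|² + 4 t R² + 2 A / R^(p-2)` for all `t, R > 0`, and the choice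
`R = (4/s)^(1/(p-2)) A^(1/p)` with `t` as in the statement makes each error term `(s/2) A^(2/p)`.
-/

open Topology ProbabilityTheory
open scoped NNReal

def truncate (R a : ℝ) : ℝ := max (min a R) (-R)

section truncate

variable {R a : ℝ}

lemma lipschitzWith_truncate (R : ℝ) : LipschitzWith 1 (truncate R) :=
  (LipschitzWith.id.min_const R).max_const (-R)

lemma abs_truncate_le (hR : 0 ≤ R) : |truncate R a| ≤ R :=
  abs_le.2 ⟨le_max_right _ _, max_le (min_le_right _ _) (by linarith)⟩

lemma truncate_of_abs_le (h : |a| ≤ R) : truncate R a = a := by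
  rw [truncate, min_eq_left (abs_le.1 h).2, max_eq_left (abs_le.1 h).1]

lemma truncate_zero (hR : 0 ≤ R) : truncate R 0 = 0 :=
  truncate_of_abs_le (by simpa using hR)

lemma sq_sub_truncate_le_sq (hR : 0 ≤ R) : (a - truncate R a) ^ 2 ≤ a ^ 2 := by
  unfold truncate
  rcases le_total a R with h | h
  · rcases le_total a (-R) with h' | h'
    · rw [min_eq_left h, max_eq_right h']; nlinarith
    · rw [min_eq_left h, max_eq_left h']; nlinarith
  · rw [min_eq_right h, max_eq_left (by linarith)]; nlinarith

lemma sq_le_rpow_div_of_le_abs {p : ℝ} (hR : 0 < R) (hp : 2 ≤ p) (h : R ≤ |a|) :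
    a ^ 2 ≤ |a| ^ p / R ^ (p - 2) := by
  have ha : 0 < |a| := hR.trans_le h
  rw [le_div_iff₀ (by positivity), show p = 2 + (p - 2) by ring, rpow_add ha, ← sq_abs a,
    add_sub_cancel_left, rpow_two]
  gcongr

lemma sq_le_sq_truncate_add {p : ℝ} (hR : 0 < R) (hp : 2 ≤ p) :
    a ^ 2 ≤ truncate R a ^ 2 + |a| ^ p / R ^ (p - 2) := by
  rcases le_total |a| R with h | h
  · rw [truncate_of_abs_le h, le_add_iff_nonneg_right]
    positivity
  · nlinarith [sq_le_rpow_div_of_le_abs hR hp h, sq_nonneg (truncate R a)]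

lemma sq_sub_truncate_le {p : ℝ} (hR : 0 < R) (hp : 2 ≤ p) :
    (a - truncate R a) ^ 2 ≤ |a| ^ p / R ^ (p - 2) := by
  rcases le_total |a| R with h | h
  · rw [truncate_of_abs_le h, sub_self, sq, zero_mul]
    positivity
  · exact (sq_sub_truncate_le_sq hR.le).trans (sq_le_rpow_div_of_le_abs hR hp h)

end truncate

lemma abs_osc_le {ι : Type*} [Nonempty ι] {h : ι → ℝ} {R : ℝ} (hh : ∀ x, |h x| ≤ R) :
    |osc h| ≤ 2 * R := by
  have hub : ∀ b ∈ range h, b ≤ R := by rintro _ ⟨x, rfl⟩; exact (abs_le.1 (hh x)).2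
  have hlb : ∀ b ∈ range h, -R ≤ b := by rintro _ ⟨x, rfl⟩; exact (abs_le.1 (hh x)).1
  obtain ⟨x⟩ := ‹Nonempty ι›
  have hsup : sSup (range h) ≤ R := csSup_le (range_nonempty h) hub
  have hinf : -R ≤ sInf (range h) := le_csInf (range_nonempty h) hlb
  have hsup' : -R ≤ sSup (range h) := (hlb _ ⟨x, rfl⟩).trans (le_csSup ⟨R, hub⟩ ⟨x, rfl⟩)
  have hinf' : sInf (range h) ≤ R := (csInf_le ⟨-R, hlb⟩ ⟨x, rfl⟩).trans (hub _ ⟨x, rfl⟩)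
  rw [osc, abs_le]
  constructor <;> linarith

lemma rpow_div_two_rpow_eq {p s : ℝ} (hp : 2 < p) (hs : 0 < s) :
    s ^ (p / (p - 2)) / 2 ^ ((3 * p - 2) / (p - 2)) =
      s / (8 * ((4 / s) ^ (1 / (p - 2))) ^ 2) := by
  have hp2 : 0 < p - 2 := by linarith
  rw [← rpow_natCast, ← rpow_mul (by positivity), div_rpow (by norm_num) hs.le,
    show (4 : ℝ) = 2 ^ (2 : ℝ) by norm_num, ← rpow_mul (by norm_num),
    show (8 : ℝ) = 2 ^ (3 : ℝ) by norm_num, mul_div_assoc', ← rpow_add (by norm_num),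
    div_div_eq_mul_div, ← rpow_one_add' hs.le]
  · congr 2 <;> field_simp <;> push_cast <;> ring
  · positivity

lemma le_add_mul_rpow_of_forall_pos {p s A x b : ℝ} (hp : 2 < p) (hs : 0 < s) (hA : 0 ≤ A)
    (h : ∀ R > 0, x ≤ b + s ^ (p / (p - 2)) / 2 ^ ((3 * p - 2) / (p - 2)) * (2 * R) ^ 2
      + 2 * (A / R ^ (p - 2))) :
    x ≤ b + s * A ^ (2 / p) := by
  set k := (4 / s) ^ (1 / (p - 2))
  have hk : 0 < k := by positivity
  have hkp : k ^ (p - 2) = 4 / s := by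
    rw [← rpow_mul (by positivity), one_div_mul_cancel (by linarith), rpow_one]
  -- With `R = k u` the two error terms become `s/2 · u²` and `s/2 · A / u^(p-2)`.
  have hku : ∀ u > 0, x ≤ b + s / 2 * (u ^ 2 + A / u ^ (p - 2)) := fun u hu => by
    refine (h (k * u) (by positivity)).trans_eq ?_
    rw [rpow_div_two_rpow_eq hp hs, mul_rpow hk.le hu.le, hkp]
    field_simp
    ring
  rcases hA.eq_or_lt with rfl | hA
  · rw [zero_rpow (by positivity), mul_zero, add_zero]
    refine le_of_forall_pos_le_add fun ε hε => (hku (√(2 * ε / s)) (by positivity)).trans_eq ?_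
    rw [zero_div, add_zero, sq_sqrt (by positivity)]
    field_simp
  · set u := A ^ (1 / p)
    have hu2 : u ^ 2 = A ^ (2 / p) := by
      rw [← rpow_natCast, ← rpow_mul hA.le]
      ring_nf
    have hup : A / u ^ (p - 2) = A ^ (2 / p) := by
      rw [← rpow_mul hA.le, div_eq_iff (by positivity), ← rpow_add hA]
      conv_lhs => rw [← rpow_one A]
      congr 1
      field_simp
      ring
    refine (hku u (by positivity)).trans_eq ?_
    rw [hu2, hup]
    ring

section Probability

variable {Ω : Type*} [MeasurableSpace Ω] {μ : Measure Ω} [IsProbabilityMeasure μ]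

lemma var_eq_variance {f : Ω → ℝ} (hf : MemLp f 2 μ) : var μ f = variance f μ := by
  rw [var, variance_eq_sub hf]
  rfl

lemma sq_integral_le_integral_sq {f : Ω → ℝ} (hf : MemLp f 2 μ) :
    (∫ x, f x ∂μ) ^ 2 ≤ ∫ x, f x ^ 2 ∂μ := by
  have := variance_nonneg f μ
  rw [← var_eq_variance hf, var] at this
  linarith

lemma integral_sq_le_var_truncate_add {g : Ω → ℝ} {p R : ℝ} (hp : 2 ≤ p) (hR : 0 < R)
    (hg : MemLp g (ENNReal.ofReal p) μ) (hg0 : ∫ x, g x ∂μ = 0) :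
    ∫ x, g x ^ 2 ∂μ ≤
      var μ (fun x => truncate R (g x)) + 2 * ((∫ x, |g x| ^ p ∂μ) / R ^ (p - 2)) := by
  set h := fun x => truncate R (g x)
  have hg2 : MemLp g 2 μ := hg.mono_exponent <| by
    rw [← ENNReal.ofReal_ofNat 2]; exact ENNReal.ofReal_le_ofReal hp
  have hh2 : MemLp h 2 μ := (lipschitzWith_truncate R).comp_memLp (truncate_zero hR.le) hg2
  have htail : Integrable (fun x => |g x| ^ p / R ^ (p - 2)) μ := by
    have := hg.integrable_norm_rpow'.div_const (R ^ (p - 2))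
    simpa [ENNReal.toReal_ofReal (by linarith : 0 ≤ p)] using this
  have hmean : (∫ x, h x ∂μ) ^ 2 ≤ ∫ x, |g x| ^ p / R ^ (p - 2) ∂μ := calc
    (∫ x, h x ∂μ) ^ 2 = (∫ x, (g x - h x) ∂μ) ^ 2 := by
      rw [integral_sub (hg2.integrable one_le_two) (hh2.integrable one_le_two), hg0]
      ring
    _ ≤ ∫ x, (g x - h x) ^ 2 ∂μ := sq_integral_le_integral_sq (hg2.sub hh2)
    _ ≤ ∫ x, |g x| ^ p / R ^ (p - 2) ∂μ :=
      integral_mono (hg2.sub hh2).integrable_sq htail fun x => sq_sub_truncate_le hR hp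
  calc ∫ x, g x ^ 2 ∂μ ≤ ∫ x, (h x ^ 2 + |g x| ^ p / R ^ (p - 2)) ∂μ :=
        integral_mono hg2.integrable_sq (hh2.integrable_sq.add htail)
          fun x => sq_le_sq_truncate_add hR hp
    _ = var μ h + (∫ x, h x ∂μ) ^ 2 + ∫ x, |g x| ^ p / R ^ (p - 2) ∂μ := by
      rw [integral_add hh2.integrable_sq htail, var]
      ring
    _ ≤ var μ h + 2 * ((∫ x, |g x| ^ p ∂μ) / R ^ (p - 2)) := by
      rw [← integral_div]
      linarith

end Probability

lemma BddLip.memLp {X : Type*} [PseudoEMetricSpace X] [MeasurableSpace X]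
    [OpensMeasurableSpace X] {μ : Measure X} [IsFiniteMeasure μ] {f : X → ℝ} (hf : BddLip f)
    (p : ℝ≥0∞) : MemLp f p μ := by
  obtain ⟨⟨K, hK⟩, ⟨M, hM⟩⟩ := hf
  exact .of_bound hK.continuous.aestronglyMeasurable M (ae_of_all _ hM)

section WeakPoincare

variable {E : Type*} [NormedAddCommGroup E] [NormedSpace ℝ E]

lemma norm_fderiv_truncate_comp_le {g : E → ℝ} (hg : Continuous g) {R : ℝ} (hR : 0 < R)
    (x : E) : ‖fderiv ℝ (fun y => truncate R (g y)) x‖ ≤ ‖fderiv ℝ g x‖ := by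
  rcases lt_or_ge (g x) R with hlt | hge
  · rcases lt_or_ge (-R) (g x) with hgt | hle
    · have hloc : (fun y => truncate R (g y)) =ᶠ[𝓝 x] g := by
        filter_upwards [(isOpen_Ioo.preimage hg).mem_nhds ⟨hgt, hlt⟩] with y hy
        exact truncate_of_abs_le (abs_le.2 ⟨hy.1.le, hy.2.le⟩)
      rw [hloc.fderiv_eq]
    · have hx : truncate R (g x) = -R := by
        rw [truncate, min_eq_left (by linarith), max_eq_right hle]
      have hmin : IsLocalMin (fun y => truncate R (g y)) x :=
        Eventually.of_forall fun y => by
          simpa only [hx] using (abs_le.1 (abs_truncate_le hR.le)).1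
      simp [hmin.fderiv_eq_zero]
  · have hx : truncate R (g x) = R := by
      rw [truncate, min_eq_right hge, max_eq_left (by linarith)]
    have hmax : IsLocalMax (fun y => truncate R (g y)) x :=
      Eventually.of_forall fun y => by
        simpa only [hx] using (abs_le.1 (abs_truncate_le hR.le)).2
    simp [hmax.fderiv_eq_zero]

variable [MeasurableSpace E] [OpensMeasurableSpace E] {μ : Measure E} [IsProbabilityMeasure μ]

lemma LipschitzWith.integrable_norm_fderiv_sq {f : E → ℝ} {K : ℝ≥0} (hf : LipschitzWith K f) :
    Integrable (fun x => ‖fderiv ℝ f x‖ ^ 2) μ := by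
  refine .of_bound ((measurable_fderiv ℝ f).norm.pow_const 2).aestronglyMeasurable (K ^ 2)
    (ae_of_all _ fun x => ?_)
  rw [norm_pow, norm_norm]
  gcongr
  exact norm_fderiv_le_of_lipschitz ℝ hf

theorem WeakPoincare.var_le_add_moment_div_rpow {β : ℝ → ℝ} (hwp : WeakPoincare μ β)
    {t p R : ℝ} (ht : 0 < t) (hβ : 0 ≤ β t) (hp : 2 ≤ p) (hR : 0 < R) {f : E → ℝ} (hf : BddLip f) :
    var μ f ≤ β t * ∫ x, ‖fderiv ℝ f x‖ ^ 2 ∂μ + t * (2 * R) ^ 2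
      + 2 * ((∫ x, |f x - ∫ y, f y ∂μ| ^ p ∂μ) / R ^ (p - 2)) := by
  obtain ⟨K, hK⟩ := hf.1
  set c := ∫ y, f y ∂μ
  set h := fun x => truncate R (f x - c)
  have hcentred : ∫ x, (f x - c) ∂μ = 0 := by
    simp [integral_sub ((hf.memLp 1).integrable le_rfl) (integrable_const c), c]
  have hvar : var μ f = ∫ x, (f x - c) ^ 2 ∂μ := by
    rw [var_eq_variance (hf.memLp 2), variance_eq_integral (hf.memLp 2).aemeasurable]
  have hhK : LipschitzWith K h := by
    have := (lipschitzWith_truncate R).comp (hK.sub (LipschitzWith.const c))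
    rwa [add_zero, one_mul] at this
  have hDh : ∫ x, ‖fderiv ℝ h x‖ ^ 2 ∂μ ≤ ∫ x, ‖fderiv ℝ f x‖ ^ 2 ∂μ := by
    refine integral_mono_of_nonneg (ae_of_all _ fun x => by positivity)
      hK.integrable_norm_fderiv_sq (ae_of_all _ fun x => ?_)
    have := norm_fderiv_truncate_comp_le (g := fun y => f y - c)
      (hK.continuous.sub continuous_const) hR x
    rw [fderiv_sub_const] at this
    exact pow_le_pow_left₀ (norm_nonneg _) this 2
  have hosc : osc h ^ 2 ≤ (2 * R) ^ 2 := by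
    have := abs_le.1 (abs_osc_le fun x => abs_truncate_le (a := f x - c) hR.le)
    exact sq_le_sq' this.1 this.2
  calc var μ f = ∫ x, (f x - c) ^ 2 ∂μ := hvar
    _ ≤ var μ h + 2 * ((∫ x, |f x - c| ^ p ∂μ) / R ^ (p - 2)) :=
      integral_sq_le_var_truncate_add hp hR ((hf.memLp _).sub (memLp_const c)) hcentred
    _ ≤ β t * ∫ x, ‖fderiv ℝ h x‖ ^ 2 ∂μ + t * osc h ^ 2
        + 2 * ((∫ x, |f x - c| ^ p ∂μ) / R ^ (p - 2)) := by
      gcongr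
      exact hwp t ht h ⟨⟨K, hhK⟩, ⟨R, fun x => abs_truncate_le hR.le⟩⟩
    _ ≤ _ := by gcongr

end WeakPoincare

theorem stmt_9_general (d : ℕ) (μ : Measure (Euc d)) (hprob : IsProbabilityMeasure μ)
    (β : ℝ → ℝ) (hβnonneg : ∀ s, 0 ≤ β s)
    (hwp : WeakPoincare μ β) :
    ∀ p : ℝ, 2 < p → ∀ s : ℝ, 0 < s → ∀ f : Euc d → ℝ, BddLip f →
      var μ f ≤
        β (s ^ (p / (p - 2)) / 2 ^ ((3 * p - 2) / (p - 2))) *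
            (∫ x, ‖fderiv ℝ f x‖ ^ 2 ∂μ)
          + s * (∫ x, |f x - ∫ y, f y ∂μ| ^ p ∂μ) ^ (2 / p) := by
  intro p hp s hs f hf
  refine le_add_mul_rpow_of_forall_pos hp hs (integral_nonneg fun _ => by positivity)
    fun R hR => ?_
  exact hwp.var_le_add_moment_div_rpow (by positivity) (hβnonneg _) hp.le hR hf

/-- a weak Poincaré inequality implies a p-weak Poincaré inequality
where the oscillation is replaced by the centered `L^p` norm. -/
theorem stmt_9 (d : ℕ) (μ : Measure (Euc d)) (hprob : IsProbabilityMeasure μ)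
    (β : ℝ → ℝ) (hβnonneg : ∀ s, 0 ≤ β s) (hβmono : Antitone β)
    (hwp : WeakPoincare μ β) :
    ∀ p : ℝ, 2 < p → ∀ s : ℝ, 0 < s → ∀ f : Euc d → ℝ, BddLip f →
      var μ f ≤
        β (s ^ (p / (p - 2)) / 2 ^ ((3 * p - 2) / (p - 2))) *
            (∫ x, ‖fderiv ℝ f x‖ ^ 2 ∂μ)
          + s * (∫ x, |f x - ∫ y, f y ∂μ| ^ p ∂μ) ^ (2 / p) :=
  stmt_9_general d μ hprob β hβnonneg hwp
end
end

section
/- Let Z_1,…,Z_n be independent ℝ^d-valued random vectors whose laws satisfy weak logarithmic Sobolev inequalities with nonincreasing rate functions β^{LS}_{Z_1},…,β^{LS}_{Z_n}. Then the law of Z_1+…+Z_n satisfies a weak logarithmic Sobolev inequality with rate function s ↦ Σ_{i=1}^n β^{LS}_{Z_i}(s/n); that is, for every s > 0 and every bounded Lipschitz f : ℝ^d → ℝ, Ent(f²(Z_1+…+Z_n)) ≤ (Σ_i β^{LS}_{Z_i}(s/n)) · E[|∇f(Z_1+…+Z_n)|²] + s·Osc(f)². -/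
open MeasureTheory Real Filter Set
open scoped ENNReal RealInnerProductSpace BigOperators

noncomputable section

/-!
Write `Ent_κ(F) = ∫ F log F dκ - (∫ F dκ) log (∫ F dκ)`, so that `entSq κ f = Ent_κ(f²)`. Entropy is
subadditive on products: for bounded `F ≥ 0` on `X × Y`,
`Ent_{μ⊗ν}(F) ≤ ∫ Ent_μ(F(·, y)) dν(y) + ∫ Ent_ν(F(x, ·)) dμ(x)`. With `m`, `G` the two marginals
of `F` and `M = ∫ F`, this is the integral of `a - b ≤ a log (a / b)` at `a = F(x, y)`,
`b = m(x) G(y) / M`, whose left side integrates to `M - M = 0`.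

For `F(x, y) = f(x + y)²` every slice is a translate of `f`, with the same oscillation and the
translated gradient, so log-Sobolev inequalities for `μ` and `ν` with gradient constants `A`, `B` and
defects `s`, `t` give one for `μ ∗ ν` with gradient constant `A + B` and defect `s + t`. Adding the
`n` summands one at a time, each with defect `s / n`, gives the rate `∑ i, β i (s / n)`.
-/

lemma sub_le_mul_log_div {a b : ℝ} (ha : 0 ≤ a) (hb : 0 < b) : a - b ≤ a * log (a / b) := by
  rcases ha.eq_or_lt with rfl | ha
  · simpa using hb.le
  have h := mul_le_mul_of_nonneg_left (log_le_sub_one_of_pos (div_pos hb ha)) ha.le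
  rw [mul_sub, mul_div_cancel₀ _ ha.ne', mul_one] at h
  rw [← inv_div, log_inv]
  linarith

lemma sub_mul_div_le_mul_log {a b c M : ℝ} (ha : 0 ≤ a) (hb : 0 ≤ b) (hc : 0 ≤ c) (hM : 0 < M)
    (hab : a = 0 ∨ 0 < b) (hac : a = 0 ∨ 0 < c) :
    a - b * c / M ≤ a * log a - a * log b - a * log c + a * log M := by
  rcases eq_or_ne a 0 with rfl | ha0
  · simpa using div_nonneg (mul_nonneg hb hc) hM.le
  have hb := hab.resolve_left ha0
  have hc := hac.resolve_left ha0
  calc a - b * c / M ≤ a * log (a / (b * c / M)) := sub_le_mul_log_div ha (by positivity)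
    _ = _ := by
      rw [log_div ha0 (by positivity), log_div (by positivity) hM.ne', log_mul hb.ne' hc.ne']
      ring

lemma exists_abs_mul_log_le (C : ℝ) : ∃ B, ∀ t ∈ Icc 0 C, |t * log t| ≤ B :=
  isCompact_Icc.exists_bound_of_continuousOn continuous_mul_log.continuousOn

section Entropy

variable {X : Type*} [MeasurableSpace X]

def ent (κ : Measure X) (F : X → ℝ) : ℝ :=
  ∫ x, F x * log (F x) ∂κ - (∫ x, F x ∂κ) * log (∫ x, F x ∂κ)

lemma ent_map {Y : Type*} [MeasurableSpace Y] {κ : Measure X} {f : X → Y} (hf : Measurable f)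
    {F : Y → ℝ} (hF : Measurable F) : ent (κ.map f) F = ent κ (fun x => F (f x)) := by
  simp only [ent]
  have hφF : Measurable fun y => F y * log (F y) := continuous_mul_log.measurable.comp hF
  rw [integral_map hf.aemeasurable hF.aestronglyMeasurable,
    integral_map hf.aemeasurable hφF.aestronglyMeasurable]

variable {κ : Measure X} {F : X → ℝ} {C : ℝ}

lemma integrable_of_mem_Icc [IsFiniteMeasure κ] (hF : Measurable F)
    (hFC : ∀ x, F x ∈ Icc 0 C) : Integrable F κ :=
  .of_bound hF.aestronglyMeasurable C <| ae_of_all _ fun x => by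
    rw [norm_of_nonneg (hFC x).1]; exact (hFC x).2

lemma integrable_mul_log_of_mem_Icc [IsFiniteMeasure κ] (hF : Measurable F)
    (hFC : ∀ x, F x ∈ Icc 0 C) : Integrable (fun x => F x * log (F x)) κ := by
  obtain ⟨B, hB⟩ := exists_abs_mul_log_le C
  exact .of_bound (continuous_mul_log.measurable.comp hF).aestronglyMeasurable B <|
    ae_of_all _ fun x => hB _ (hFC x)

lemma integral_mem_Icc_of_mem_Icc [IsProbabilityMeasure κ] (hFC : ∀ x, F x ∈ Icc 0 C) :
    ∫ x, F x ∂κ ∈ Icc 0 C := by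
  have h := norm_integral_le_of_norm_le_const (μ := κ) (ae_of_all _ fun x => by
    rw [norm_of_nonneg (hFC x).1]; exact (hFC x).2)
  rw [probReal_univ, mul_one] at h
  exact ⟨integral_nonneg fun x => (hFC x).1, (le_norm_self _).trans h⟩

lemma integral_left_mem_Icc {Y : Type*} [IsProbabilityMeasure κ] {F : X × Y → ℝ}
    (hFC : ∀ p, F p ∈ Icc 0 C) (y : Y) : ∫ x, F (x, y) ∂κ ∈ Icc 0 C :=
  integral_mem_Icc_of_mem_Icc fun x => hFC (x, y)

lemma integral_mul_log_eq_zero (hF0 : ∀ x, 0 ≤ F x) (hFi : Integrable F κ)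
    (h : ∫ x, F x ∂κ = 0) : ∫ x, F x * log (F x) ∂κ = 0 :=
  integral_eq_zero_of_ae <| ((integral_eq_zero_iff_of_nonneg hF0 hFi).mp h).mono fun x hx => by
    simp [show F x = 0 from hx]

lemma ae_eq_zero_or_integral_pos [IsFiniteMeasure κ] (hF : Measurable F)
    (hFC : ∀ x, F x ∈ Icc 0 C) : ∀ᵐ x ∂κ, F x = 0 ∨ 0 < ∫ x, F x ∂κ := by
  rcases (integral_nonneg fun x => (hFC x).1 : 0 ≤ ∫ x, F x ∂κ).eq_or_lt with h | h
  · exact ((integral_eq_zero_iff_of_nonneg (fun x => (hFC x).1)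
      (integrable_of_mem_Icc hF hFC)).mp h.symm).mono fun x hx => Or.inl hx
  · exact ae_of_all _ fun _ => Or.inr h

lemma entSq_eq_ent [IsProbabilityMeasure κ] {g : X → ℝ} (hg : Measurable g)
    (hsq : ∀ x, g x ^ 2 ∈ Icc 0 C) : entSq κ g = ent κ (fun x => g x ^ 2) := by
  have hint := integrable_of_mem_Icc (κ := κ) (hg.pow_const 2) hsq
  set M := ∫ x, g x ^ 2 ∂κ
  rcases (integral_nonneg fun x => sq_nonneg (g x) : 0 ≤ M).eq_or_lt with hM | hM
  · -- `entSq` then integrates `g² log (g² / 0) = g² log 0 = 0`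
    have hφ := integral_mul_log_eq_zero (fun x => sq_nonneg (g x)) hint hM.symm
    simp only [entSq, ent, ← hM, hφ, div_zero, log_zero, mul_zero, integral_zero, sub_zero]
  · have hpt : ∀ x, g x ^ 2 * log (g x ^ 2 / M) =
        g x ^ 2 * log (g x ^ 2) - g x ^ 2 * log M := fun x => by
      rcases eq_or_ne (g x) 0 with hx | hx
      · simp [hx]
      · rw [log_div (pow_ne_zero 2 hx) hM.ne', mul_sub]
    rw [entSq, ent, integral_congr_ae (ae_of_all _ hpt),
      integral_sub (integrable_mul_log_of_mem_Icc (hg.pow_const 2) hsq) (hint.mul_const _),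
      integral_mul_const]

end Entropy

section Tensorization

variable {X Y : Type*} [MeasurableSpace X] [MeasurableSpace Y] {μ : Measure X} {ν : Measure Y}
  [IsProbabilityMeasure μ] [IsProbabilityMeasure ν] {F : X × Y → ℝ} {C : ℝ}

lemma measurable_integral_left (hF : Measurable F) : Measurable fun y => ∫ x, F (x, y) ∂μ :=
  hF.stronglyMeasurable.integral_prod_left'.measurable

lemma integrable_ent_left (hF : Measurable F) (hFC : ∀ p, F p ∈ Icc 0 C) :
    Integrable (fun y => ent μ (fun x => F (x, y))) ν :=
  (integrable_mul_log_of_mem_Icc hF hFC).integral_prod_right.sub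
    (integrable_mul_log_of_mem_Icc (measurable_integral_left hF) (integral_left_mem_Icc hFC))

lemma integral_ent_left (hF : Measurable F) (hFC : ∀ p, F p ∈ Icc 0 C) :
    ∫ y, ent μ (fun x => F (x, y)) ∂ν = ∫ p, F p * log (F p) ∂(μ.prod ν) -
      ∫ y, (∫ x, F (x, y) ∂μ) * log (∫ x, F (x, y) ∂μ) ∂ν := by
  have hφF := integrable_mul_log_of_mem_Icc (κ := μ.prod ν) hF hFC
  simp only [ent]
  rw [integral_sub hφF.integral_prod_right (integrable_mul_log_of_mem_Icc
    (measurable_integral_left hF) (integral_left_mem_Icc hFC)), integral_prod_symm _ hφF]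

lemma integrable_mul_log_integral_left (hF : Measurable F) (hFC : ∀ p, F p ∈ Icc 0 C) :
    Integrable (fun p => F p * log (∫ x, F (x, p.2) ∂μ)) (μ.prod ν) := by
  have hG := measurable_integral_left (μ := μ) hF
  have hmeas : Measurable fun p => F p * log (∫ x, F (x, p.2) ∂μ) :=
    hF.mul (measurable_log.comp (hG.comp measurable_snd))
  refine (integrable_prod_iff' hmeas.aestronglyMeasurable).2 ⟨ae_of_all _ fun y => ?_, ?_⟩
  · have hFy : Measurable fun x => F (x, y) := hF.comp measurable_prodMk_right
    exact (integrable_of_mem_Icc (κ := μ) hFy fun x => hFC (x, y)).mul_const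
      (log (∫ x, F (x, y) ∂μ))
  · have hslice : ∀ y, ∫ x, ‖F (x, y) * log (∫ x, F (x, y) ∂μ)‖ ∂μ =
        ‖(∫ x, F (x, y) ∂μ) * log (∫ x, F (x, y) ∂μ)‖ := fun y => by
      simp only [norm_mul, integral_mul_const]
      rw [integral_congr_ae (ae_of_all _ fun x => norm_of_nonneg (hFC (x, y)).1),
        norm_of_nonneg (integral_left_mem_Icc (κ := μ) hFC y).1]
    simp only [hslice]
    exact (integrable_mul_log_of_mem_Icc hG (integral_left_mem_Icc hFC)).norm

lemma integral_mul_log_integral_left (hF : Measurable F) (hFC : ∀ p, F p ∈ Icc 0 C) :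
    ∫ p, F p * log (∫ x, F (x, p.2) ∂μ) ∂(μ.prod ν) =
      ∫ y, (∫ x, F (x, y) ∂μ) * log (∫ x, F (x, y) ∂μ) ∂ν := by
  rw [integral_prod_symm _ (integrable_mul_log_integral_left hF hFC)]
  simp only [integral_mul_const]

lemma integrable_mul_log_integral_right (hF : Measurable F) (hFC : ∀ p, F p ∈ Icc 0 C) :
    Integrable (fun p => F p * log (∫ y, F (p.1, y) ∂ν)) (μ.prod ν) :=
  (integrable_mul_log_integral_left (μ := ν) (ν := μ) (F := fun q => F q.swap)
    (hF.comp measurable_swap) fun q => hFC q.swap).swap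

lemma integral_mul_log_integral_right (hF : Measurable F) (hFC : ∀ p, F p ∈ Icc 0 C) :
    ∫ p, F p * log (∫ y, F (p.1, y) ∂ν) ∂(μ.prod ν) =
      ∫ x, (∫ y, F (x, y) ∂ν) * log (∫ y, F (x, y) ∂ν) ∂μ :=
  (integral_prod_swap (fun p => F p * log (∫ y, F (p.1, y) ∂ν))).symm.trans
    (integral_mul_log_integral_left (μ := ν) (ν := μ) (F := fun q => F q.swap)
      (hF.comp measurable_swap) fun q => hFC q.swap)

lemma ae_eq_zero_or_integral_left_pos (hF : Measurable F) (hFC : ∀ p, F p ∈ Icc 0 C) :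
    ∀ᵐ p ∂(μ.prod ν), F p = 0 ∨ 0 < ∫ x, F (x, p.2) ∂μ := by
  have hmeas : MeasurableSet {p : X × Y | F p = 0 ∨ 0 < ∫ x, F (x, p.2) ∂μ} :=
    (measurableSet_eq_fun hF measurable_const).union
      (measurableSet_lt measurable_const ((measurable_integral_left hF).comp measurable_snd))
  rw [Measure.ae_prod_iff_ae_ae hmeas, Measure.ae_ae_comm hmeas]
  exact ae_of_all _ fun y =>
    ae_eq_zero_or_integral_pos (hF.comp measurable_prodMk_right) fun x => hFC (x, y)

lemma ae_eq_zero_or_integral_right_pos (hF : Measurable F) (hFC : ∀ p, F p ∈ Icc 0 C) :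
    ∀ᵐ p ∂(μ.prod ν), F p = 0 ∨ 0 < ∫ y, F (p.1, y) ∂ν :=
  Measure.measurePreserving_swap.quasiMeasurePreserving.ae
    (ae_eq_zero_or_integral_left_pos (μ := ν) (ν := μ) (F := fun q => F q.swap)
      (hF.comp measurable_swap) fun q => hFC q.swap)

lemma integral_mul_log_integral_left_add_right_le (hF : Measurable F)
    (hFC : ∀ p, F p ∈ Icc 0 C) :
    ∫ y, (∫ x, F (x, y) ∂μ) * log (∫ x, F (x, y) ∂μ) ∂ν +
        ∫ x, (∫ y, F (x, y) ∂ν) * log (∫ y, F (x, y) ∂ν) ∂μ ≤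
      ∫ p, F p * log (F p) ∂(μ.prod ν) +
        (∫ p, F p ∂(μ.prod ν)) * log (∫ p, F p ∂(μ.prod ν)) := by
  set G := fun y => ∫ x, F (x, y) ∂μ
  set m := fun x => ∫ y, F (x, y) ∂ν
  set M := ∫ p, F p ∂(μ.prod ν)
  show ∫ y, G y * log (G y) ∂ν + ∫ x, m x * log (m x) ∂μ ≤ _
  have hFi := integrable_of_mem_Icc (κ := μ.prod ν) hF hFC
  have hGi : Integrable G ν := hFi.integral_prod_right
  have hmi : Integrable m μ := hFi.integral_prod_left
  have hGM : ∫ y, G y ∂ν = M := (integral_prod_symm F hFi).symm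
  have hmM : ∫ x, m x ∂μ = M := (integral_prod F hFi).symm
  have hG0 : ∀ y, 0 ≤ G y := fun y => integral_nonneg fun x => (hFC (x, y)).1
  have hm0 : ∀ x, 0 ≤ m x := fun x => integral_nonneg fun y => (hFC (x, y)).1
  rcases (integral_nonneg fun p => (hFC p).1 : 0 ≤ M).eq_or_lt with hM | hM
  · rw [integral_mul_log_eq_zero hG0 hGi (hGM.trans hM.symm),
      integral_mul_log_eq_zero hm0 hmi (hmM.trans hM.symm),
      integral_mul_log_eq_zero (fun p => (hFC p).1) hFi hM.symm, show M = 0 from hM.symm]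
    simp
  have hpt : ∀ᵐ p ∂(μ.prod ν), F p - m p.1 * G p.2 / M ≤
      F p * log (F p) - F p * log (m p.1) - F p * log (G p.2) + F p * log M := by
    filter_upwards [ae_eq_zero_or_integral_right_pos hF hFC,
      ae_eq_zero_or_integral_left_pos hF hFC] with p hmp hGp
    exact sub_mul_div_le_mul_log (hFC p).1 (hm0 p.1) (hG0 p.2) hM hmp hGp
  have hφF := integrable_mul_log_of_mem_Icc (κ := μ.prod ν) hF hFC
  have hFlogm : Integrable (fun p => F p * log (m p.1)) (μ.prod ν) :=
    integrable_mul_log_integral_right hF hFC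
  have hFlogG : Integrable (fun p => F p * log (G p.2)) (μ.prod ν) :=
    integrable_mul_log_integral_left hF hFC
  have h1 : Integrable (fun p => F p * log (F p) - F p * log (m p.1)) (μ.prod ν) :=
    hφF.sub hFlogm
  have h2 : Integrable (fun p => F p * log (F p) - F p * log (m p.1) - F p * log (G p.2))
      (μ.prod ν) := h1.sub hFlogG
  have hmG : Integrable (fun p => m p.1 * G p.2 / M) (μ.prod ν) :=
    (hmi.mul_prod hGi).div_const M
  have hint : ∫ p, (F p - m p.1 * G p.2 / M) ∂(μ.prod ν) ≤ ∫ p, (F p * log (F p) -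
      F p * log (m p.1) - F p * log (G p.2) + F p * log M) ∂(μ.prod ν) :=
    integral_mono_ae (hFi.sub hmG) (h2.add (hFi.mul_const _)) hpt
  rw [integral_sub hFi hmG, integral_div, integral_prod_mul, hmM, hGM, integral_add h2
    (hFi.mul_const _), integral_sub h1 hFlogG, integral_sub hφF hFlogm, integral_mul_const,
    integral_mul_log_integral_left hF hFC, integral_mul_log_integral_right hF hFC,
    mul_div_assoc, div_self hM.ne', mul_one] at hint
  linarith

lemma ent_prod_le (hF : Measurable F) (hFC : ∀ p, F p ∈ Icc 0 C) :
    ent (μ.prod ν) F ≤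
      ∫ y, ent μ (fun x => F (x, y)) ∂ν + ∫ x, ent ν (fun y => F (x, y)) ∂μ := by
  have hswap := integral_ent_left (μ := ν) (ν := μ) (F := fun q => F q.swap)
    (hF.comp measurable_swap) fun q => hFC _
  simp only [Prod.swap_prod_mk] at hswap
  rw [integral_prod_swap (fun p => F p * log (F p))] at hswap
  rw [ent, integral_ent_left hF hFC, hswap]
  linarith [integral_mul_log_integral_left_add_right_le (μ := μ) (ν := ν) hF hFC]

end Tensorization

/-- `WeakLogSobolev μ β` is `DefectiveLogSobolev μ (β s) s` for all `s > 0`; with the constants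
fixed, they add up under convolution. -/
def DefectiveLogSobolev {E : Type*} [NormedAddCommGroup E] [NormedSpace ℝ E] [MeasurableSpace E]
    (μ : Measure E) (A s : ℝ) : Prop :=
  ∀ f : E → ℝ, BddLip f → entSq μ f ≤ A * ∫ x, ‖fderiv ℝ f x‖ ^ 2 ∂μ + s * osc f ^ 2

lemma DefectiveLogSobolev.mono {E : Type*} [NormedAddCommGroup E] [NormedSpace ℝ E]
    [MeasurableSpace E] {μ : Measure E} {A s t : ℝ} (h : DefectiveLogSobolev μ A s)
    (hst : s ≤ t) : DefectiveLogSobolev μ A t := fun f hf =>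
  (h f hf).trans (by gcongr)

lemma DefectiveLogSobolev.dirac {E : Type*} [NormedAddCommGroup E] [NormedSpace ℝ E]
    [MeasurableSpace E] [MeasurableSingletonClass E] (x : E) :
    DefectiveLogSobolev (Measure.dirac x) 0 0 := by
  intro f _
  rcases eq_or_ne (f x) 0 with h | h <;> simp [entSq, h]

section BddLip

variable {E : Type*} {f : E → ℝ}

lemma BddLip.measurable [PseudoEMetricSpace E] [MeasurableSpace E] [OpensMeasurableSpace E]
    (hf : BddLip f) : Measurable f :=
  hf.1.choose_spec.continuous.measurable

lemma BddLip.exists_sq_mem_Icc [PseudoEMetricSpace E] (hf : BddLip f) :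
    ∃ C, ∀ x, f x ^ 2 ∈ Icc 0 C := by
  obtain ⟨B, hB⟩ := hf.2
  exact ⟨B ^ 2, fun x => ⟨sq_nonneg _, by simpa using pow_le_pow_left₀ (abs_nonneg _) (hB x) 2⟩⟩

variable [NormedAddCommGroup E]

lemma BddLip.comp_add_right (hf : BddLip f) (c : E) : BddLip fun x => f (x + c) := by
  obtain ⟨⟨K, hK⟩, ⟨B, hB⟩⟩ := hf
  exact ⟨⟨K * 1, hK.comp (IsometryEquiv.addRight c).isometry.lipschitz⟩, ⟨B, fun x => hB _⟩⟩

lemma osc_comp_add_right (f : E → ℝ) (c : E) : osc (fun x => f (x + c)) = osc f := by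
  have h : range (fun x => f (x + c)) = range f := (Equiv.addRight c).surjective.range_comp f
  rw [osc, h, osc]

end BddLip

section Convolution

variable {E : Type*} [NormedAddCommGroup E] [NormedSpace ℝ E] [MeasurableSpace E] [BorelSpace E]
  [SecondCountableTopology E] {μ ν : Measure E} [IsProbabilityMeasure μ] [IsProbabilityMeasure ν]

lemma integral_entSq_comp_add_right_le {A s : ℝ} (hμ : DefectiveLogSobolev μ A s) {f : E → ℝ}
    (hf : BddLip f) :
    ∫ y, entSq μ (fun x => f (x + y)) ∂ν ≤
      A * ∫ x, ‖fderiv ℝ f x‖ ^ 2 ∂(μ ∗ ν) + s * osc f ^ 2 := by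
  obtain ⟨K, hK⟩ := hf.1
  obtain ⟨C, hC⟩ := hf.exists_sq_mem_Icc
  have hfm := hf.measurable
  have hF : Measurable fun p : E × E => f (p.1 + p.2) ^ 2 := (hfm.comp measurable_add).pow_const 2
  have hg : Measurable fun x => ‖fderiv ℝ f x‖ ^ 2 := (measurable_fderiv ℝ f).norm.pow_const 2
  have hgC : ∀ x, ‖fderiv ℝ f x‖ ^ 2 ∈ Icc 0 ((K : ℝ) ^ 2) := fun x =>
    ⟨sq_nonneg _, pow_le_pow_left₀ (norm_nonneg _) (norm_fderiv_le_of_lipschitz ℝ hK) 2⟩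
  have hgi : Integrable (fun p : E × E => ‖fderiv ℝ f (p.1 + p.2)‖ ^ 2) (μ.prod ν) :=
    integrable_of_mem_Icc (hg.comp measurable_add) fun p => hgC _
  have hent : ∀ y, entSq μ (fun x => f (x + y)) = ent μ (fun x => f (x + y) ^ 2) := fun y =>
    entSq_eq_ent (hfm.comp (measurable_add_const y)) fun x => hC _
  have hslice : ∀ y, entSq μ (fun x => f (x + y)) ≤
      A * ∫ x, ‖fderiv ℝ f (x + y)‖ ^ 2 ∂μ + s * osc f ^ 2 := fun y => by
    simpa only [fderiv_comp_add_right, osc_comp_add_right] using hμ _ (hf.comp_add_right y)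
  calc ∫ y, entSq μ (fun x => f (x + y)) ∂ν
      ≤ ∫ y, (A * ∫ x, ‖fderiv ℝ f (x + y)‖ ^ 2 ∂μ + s * osc f ^ 2) ∂ν := by
        refine integral_mono ?_ ((hgi.integral_prod_right.const_mul A).add (integrable_const _))
          hslice
        simpa only [hent] using integrable_ent_left hF fun p => hC (p.1 + p.2)
    _ = A * ∫ x, ‖fderiv ℝ f x‖ ^ 2 ∂(μ ∗ ν) + s * osc f ^ 2 := by
        rw [integral_add (hgi.integral_prod_right.const_mul A) (integrable_const _),
          integral_const_mul, ← integral_prod_symm _ hgi, Measure.conv,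
          integral_map measurable_add.aemeasurable hg.aestronglyMeasurable]
        simp

theorem DefectiveLogSobolev.conv {A B s t : ℝ} (hμ : DefectiveLogSobolev μ A s)
    (hν : DefectiveLogSobolev ν B t) : DefectiveLogSobolev (μ ∗ ν) (A + B) (s + t) := by
  intro f hf
  obtain ⟨C, hC⟩ := hf.exists_sq_mem_Icc
  have hfm := hf.measurable
  calc entSq (μ ∗ ν) f = ent (μ.prod ν) fun p => f (p.1 + p.2) ^ 2 := by
        rw [entSq_eq_ent hfm hC, Measure.conv, ent_map measurable_add (hfm.pow_const 2)]
    _ ≤ ∫ y, ent μ (fun x => f (x + y) ^ 2) ∂ν + ∫ x, ent ν (fun y => f (x + y) ^ 2) ∂μ :=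
        ent_prod_le ((hfm.comp measurable_add).pow_const 2) fun p => hC (p.1 + p.2)
    _ = ∫ y, entSq μ (fun x => f (x + y)) ∂ν + ∫ x, entSq ν (fun y => f (y + x)) ∂μ := by
        congr 1
        · exact integral_congr_ae <| ae_of_all _ fun y =>
            (entSq_eq_ent (hfm.comp (measurable_add_const y)) fun _ => hC _).symm
        · refine integral_congr_ae <| ae_of_all _ fun x => ?_
          simp only [add_comm x]
          exact (entSq_eq_ent (hfm.comp (measurable_add_const x)) fun _ => hC _).symm
    _ ≤ (A * ∫ x, ‖fderiv ℝ f x‖ ^ 2 ∂(μ ∗ ν) + s * osc f ^ 2) +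
          (B * ∫ x, ‖fderiv ℝ f x‖ ^ 2 ∂(ν ∗ μ) + t * osc f ^ 2) :=
        add_le_add (integral_entSq_comp_add_right_le hμ hf)
          (integral_entSq_comp_add_right_le hν hf)
    _ = _ := by rw [Measure.conv_comm ν μ]; ring

end Convolution

lemma map_sum_pi_succ {M : Type*} [AddCommMonoid M] [MeasurableSpace M] [MeasurableAdd₂ M]
    {n : ℕ} (μ : Fin (n + 1) → Measure M) [∀ i, SigmaFinite (μ i)] :
    (Measure.pi μ).map (fun z => ∑ i, z i) =
      μ 0 ∗ (Measure.pi fun i : Fin n => μ i.succ).map (fun z => ∑ i, z i) := by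
  have hsum : Measurable fun z : Fin n → M => ∑ i, z i :=
    Finset.measurable_sum _ fun i _ => measurable_pi_apply i
  have hsplit : (fun z : Fin (n + 1) → M => ∑ i, z i) = ((fun p : M × M => p.1 + p.2) ∘
      Prod.map id (fun z : Fin n → M => ∑ i, z i)) ∘
      MeasurableEquiv.piFinSuccAbove (fun _ => M) 0 := by
    funext z
    simp [Fin.sum_univ_succ, MeasurableEquiv.piFinSuccAbove_apply, Fin.insertNthEquiv, Fin.tail]
  rw [hsplit, ← Measure.map_map (by fun_prop) (MeasurableEquiv.measurable _),
    (measurePreserving_piFinSuccAbove μ 0).map_eq, ← Measure.map_map measurable_add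
      (measurable_id.prodMap hsum), ← Measure.map_prod_map _ _ measurable_id hsum, Measure.map_id]
  simp only [Fin.succAbove_zero]
  rfl

theorem DefectiveLogSobolev.map_sum_pi {E : Type*} [NormedAddCommGroup E] [NormedSpace ℝ E]
    [MeasurableSpace E] [BorelSpace E] [SecondCountableTopology E] {n : ℕ}
    {μ : Fin n → Measure E} [∀ i, IsProbabilityMeasure (μ i)] {A s : Fin n → ℝ}
    (h : ∀ i, DefectiveLogSobolev (μ i) (A i) (s i)) :
    DefectiveLogSobolev ((Measure.pi μ).map fun z => ∑ i, z i) (∑ i, A i) (∑ i, s i) := by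
  induction n with
  | zero => simpa [Measure.pi_of_empty] using DefectiveLogSobolev.dirac (0 : E)
  | succ n ih =>
    have : IsProbabilityMeasure ((Measure.pi fun i : Fin n => μ i.succ).map fun z => ∑ i, z i) :=
      Measure.isProbabilityMeasure_map
        (Finset.measurable_sum _ fun i _ => measurable_pi_apply i).aemeasurable
    rw [map_sum_pi_succ, Fin.sum_univ_succ, Fin.sum_univ_succ]
    exact (h 0).conv (ih fun i => h i.succ)

theorem stmt_18_general (n : ℕ) (d : ℕ)
    (μ : Fin n → Measure (Euc d))
    (hprob : ∀ i, IsProbabilityMeasure (μ i))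
    (β : Fin n → ℝ → ℝ)
    (hwls : ∀ i, WeakLogSobolev (μ i) (β i)) :
    WeakLogSobolev
      (Measure.map (fun z : Fin n → Euc d => ∑ i, z i) (Measure.pi μ))
      (fun s => ∑ i, β i (s / n)) := by
  intro s hs
  have hsum : ∑ _i : Fin n, s / n ≤ s := by
    rw [Finset.sum_const, Finset.card_univ, Fintype.card_fin, nsmul_eq_mul]
    rcases n.eq_zero_or_pos with rfl | hn
    · simpa using hs.le
    · rw [mul_div_cancel₀ _ (by positivity)]
  exact (DefectiveLogSobolev.map_sum_pi fun i =>
    hwls i (s / n) (div_pos hs (Nat.cast_pos.2 i.pos))).mono hsum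

/-- the law of the sum of independent random vectors whose laws
satisfy weak logarithmic Sobolev inequalities satisfies a weak logarithmic
Sobolev inequality with rate `s ↦ Σ_i β_i(s/n)`. -/
theorem stmt_18 (n : ℕ) (hn : 0 < n) (d : ℕ)
    (μ : Fin n → Measure (Euc d))
    (hprob : ∀ i, IsProbabilityMeasure (μ i))
    (β : Fin n → ℝ → ℝ)
    (hβnonneg : ∀ i s, 0 ≤ β i s) (hβmono : ∀ i, Antitone (β i))
    (hwls : ∀ i, WeakLogSobolev (μ i) (β i)) :
    WeakLogSobolev
      (Measure.map (fun z : Fin n → Euc d => ∑ i, z i) (Measure.pi μ))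
      (fun s => ∑ i, β i (s / n)) :=
  stmt_18_general n d μ hprob β hwls
end
end
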